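/- arXiv:2109.01370 — 3 statements merged into one kernel-verified Lean document; each statement's English description precedes it below -/
import Mathlib

section
/- Let p ∈ (0,∞), n ∈ ℕ, m ≥ 0, and f : ℝⁿ → [0,∞) measurable, positively homogeneous of degree m, with 0 < ∫ f(x) e^{-‖x‖_p^p} dx < ∞. Let X be a random vector with density proportional to f(x)·e^{-‖x‖_p^p}. Then X/‖X‖_p and ‖X‖_p are independent. -/
open MeasureTheory ProbabilityTheory Real

/-- ℓ_p^n (quasi-)norm on `Fin n → ℝ`. -/
noncomputable def lpnorm (p : ℝ) {n : ℕ} (x : Fin n → ℝ) : ℝ :=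
  (∑ i, |x i| ^ p) ^ (1 / p)

/-!
Let `N` be a nonnegative gauge, homogeneous of degree 1, and `ν = f · λ` with `λ` Lebesgue measure
on an `n`-dimensional space. Since `λ`, `f` and `N` are homogeneous, for every cone
`K = {x | x / N x ∈ s}` one has `ν (K ∩ {N < r}) = r ^ (n + m) * ν (K ∩ {N < 1})`. Writing
`exp (-N ^ p) = ∫_{N ^ p}^∞ exp (-t) dt` and applying Tonelli, the mass of `K ∩ {N < a}` under the
law of `X` factors as `ψ s * G a` with `G` independent of `s`. Such a product form on the
π-systems `{K}` and `{N < a}` forces independence, after normalising with `s = univ`, `a → ∞`.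
-/

open Set Filter Topology Module
open scoped ENNReal

lemma lpnorm_nonneg (p : ℝ) {n : ℕ} (x : Fin n → ℝ) : 0 ≤ lpnorm p x := by
  unfold lpnorm; positivity

lemma measurable_lpnorm (p : ℝ) (n : ℕ) : Measurable (lpnorm p (n := n)) := by
  unfold lpnorm; fun_prop

lemma lpnorm_smul {p : ℝ} (hp : 0 < p) {n : ℕ} {t : ℝ} (ht : 0 ≤ t) (x : Fin n → ℝ) :
    lpnorm p (t • x) = t * lpnorm p x := by
  have hterm : ∀ i, |t * x i| ^ p = t ^ p * |x i| ^ p := fun i => by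
    rw [abs_mul, abs_of_nonneg ht, mul_rpow ht (abs_nonneg _)]
  simp only [lpnorm, Pi.smul_apply, smul_eq_mul, hterm, ← Finset.mul_sum]
  rw [mul_rpow (by positivity) (by positivity), ← rpow_mul ht, mul_one_div_cancel hp.ne',
    rpow_one]

theorem ofReal_exp_neg_eq_lintegral_Ioi (a : ℝ) :
    ENNReal.ofReal (exp (-a)) = ∫⁻ t in Ioi a, ENNReal.ofReal (exp (-t)) := by
  rw [← ofReal_integral_eq_lintegral_ofReal
    (by simpa [IntegrableOn] using exp_neg_integrableOn_Ioi a one_pos)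
    (ae_of_all _ fun t => (exp_pos _).le), integral_exp_neg_Ioi]

theorem lintegral_ofReal_exp_neg_eq {α : Type*} [MeasurableSpace α] (ν : Measure α) [SFinite ν]
    {φ : α → ℝ} (hφ : Measurable φ) :
    ∫⁻ x, ENNReal.ofReal (exp (-φ x)) ∂ν = ∫⁻ t, ENNReal.ofReal (exp (-t)) * ν {x | φ x < t} := by
  have hmeas : Measurable (Function.uncurry fun x t =>
      {x | φ x < t}.indicator (fun _ => ENNReal.ofReal (exp (-t))) x) :=
    Measurable.indicator (by fun_prop) (measurableSet_lt (hφ.comp measurable_fst) measurable_snd)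
  calc _ = ∫⁻ x, (∫⁻ t, {x | φ x < t}.indicator (fun _ => ENNReal.ofReal (exp (-t))) x) ∂ν :=
        lintegral_congr fun x => by
          rw [ofReal_exp_neg_eq_lintegral_Ioi, ← lintegral_indicator measurableSet_Ioi]
          simp only [indicator_apply, mem_Ioi, mem_ofPred_eq]
    _ = ∫⁻ t, ∫⁻ x, {x | φ x < t}.indicator (fun _ => ENNReal.ofReal (exp (-t))) x ∂ν :=
        lintegral_lintegral_swap hmeas.aemeasurable
    _ = _ := by
        congr 1 with t
        exact lintegral_indicator_const (hφ measurableSet_Iio) _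

theorem indepFun_of_measure_inter_preimage_Iio_eq_mul {Ω β : Type*} [MeasurableSpace Ω]
    [MeasurableSpace β] {P : Measure Ω} [IsProbabilityMeasure P] {D : Ω → β} {L : Ω → ℝ}
    (hD : Measurable D) (hL : Measurable L) (hL_nonneg : ∀ ω, 0 ≤ L ω) (ψ : Set β → ℝ≥0∞)
    (G : ℝ → ℝ≥0∞)
    (h : ∀ s, MeasurableSet s → ∀ a, 0 < a → P (D ⁻¹' s ∩ L ⁻¹' Iio a) = ψ s * G a) :
    IndepFun D L P := by
  have hlim : ∀ A, Tendsto (fun r => P (A ∩ L ⁻¹' Iio r)) atTop (𝓝 (P A)) := fun A => by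
    have := tendsto_measure_iUnion_atTop (μ := P) (s := fun r : ℝ => A ∩ L ⁻¹' Iio r)
      (fun r r' hrr' => inter_subset_inter_right A (preimage_mono (Iio_subset_Iio hrr')))
    rwa [← inter_iUnion, ← preimage_iUnion, iUnion_Iio, preimage_univ, inter_univ] at this
  have hprod : ∀ s, MeasurableSet s → ∀ a,
      P (D ⁻¹' s ∩ L ⁻¹' Iio a) = P (D ⁻¹' s) * P (L ⁻¹' Iio a) := by
    intro s hs a
    rcases le_or_gt a 0 with ha | ha
    · have hempty : L ⁻¹' Iio a = ∅ := eq_empty_of_forall_notMem fun ω hω =>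
        (hL_nonneg ω).not_gt (lt_of_lt_of_le hω ha)
      rw [hempty, inter_empty, measure_empty, mul_zero]
    have hL_eq : ∀ r, 0 < r → P (L ⁻¹' Iio r) = ψ univ * G r := fun r hr => by
      simpa using h univ MeasurableSet.univ r hr
    have h1 := ENNReal.Tendsto.mul_const (hlim (D ⁻¹' s))
      (Or.inr (measure_ne_top P (L ⁻¹' Iio a)))
    have h2 := ENNReal.Tendsto.mul_const (hlim univ)
      (Or.inr (measure_ne_top P (D ⁻¹' s ∩ L ⁻¹' Iio a)))
    simp only [univ_inter, measure_univ, one_mul] at h2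
    -- both sides are limits, as `r → ∞`, of the same quantity
    -- `P (L < r) * P (D ∈ s, L < a) = P (D ∈ s, L < r) * P (L < a)`
    refine tendsto_nhds_unique (h2.congr' ?_) h1
    filter_upwards [eventually_gt_atTop 0] with r hr
    rw [h s hs a ha, h s hs r hr, hL_eq r hr, hL_eq a ha]
    ring
  rw [IndepFun_iff_Indep]
  refine IndepSets.indep hD.comap_le hL.comap_le
    (@MeasurableSpace.isPiSystem_measurableSet Ω (.comap D ‹_›)) (isPiSystem_Iio.comap L)
    (@MeasurableSpace.generateFrom_measurableSet Ω (.comap D ‹_›)).symm ?_ ?_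
  · rw [BorelSpace.measurable_eq (α := ℝ), borel_eq_generateFrom_Iio,
      MeasurableSpace.comap_generateFrom]
    rfl
  · rw [IndepSets_iff]
    rintro _ _ ⟨s, hs, rfl⟩ ⟨_, ⟨a, rfl⟩, rfl⟩
    exact hprod s hs a

theorem ProbabilityTheory.IndepFun.comp_of_map {Ω α β γ : Type*} [MeasurableSpace Ω]
    [MeasurableSpace α] [MeasurableSpace β] [MeasurableSpace γ] {P : Measure Ω} {X : Ω → α}
    {D : α → β} {L : α → γ} (h : IndepFun D L (P.map X)) (hX : Measurable X) (hD : Measurable D)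
    (hL : Measurable L) : IndepFun (D ∘ X) (L ∘ X) P := by
  rw [indepFun_iff_measure_inter_preimage_eq_mul] at h ⊢
  intro s t hs ht
  have := h s t hs ht
  rwa [Measure.map_apply hX ((hD hs).inter (hL ht)), Measure.map_apply hX (hD hs),
    Measure.map_apply hX (hL ht)] at this

section RadialProj

variable {E : Type*} [NormedAddCommGroup E] [NormedSpace ℝ E] {N : E → ℝ}

noncomputable def radialProj (N : E → ℝ) (x : E) : E := (N x)⁻¹ • x

theorem radialProj_smul (hN : ∀ t : ℝ, 0 < t → ∀ x, N (t • x) = t * N x) {r : ℝ} (hr : 0 < r)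
    (x : E) : radialProj N (r • x) = radialProj N x := by
  rw [radialProj, radialProj, hN r hr, smul_smul, mul_inv_rev, mul_assoc, inv_mul_cancel₀ hr.ne',
    mul_one]

variable [MeasurableSpace E] [BorelSpace E]

theorem measurable_radialProj (hN : Measurable N) : Measurable (radialProj N) := by
  unfold radialProj; fun_prop

variable [FiniteDimensional ℝ E] (μ : Measure E) [μ.IsAddHaarMeasure]

theorem lintegral_comp_smul_of_pos (F : E → ℝ≥0∞) {r : ℝ} (hr : 0 < r) :
    ∫⁻ x, F (r • x) ∂μ = ENNReal.ofReal (r ^ finrank ℝ E)⁻¹ * ∫⁻ x, F x ∂μ := by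
  have h := lintegral_map_equiv F (MeasurableEquiv.smul₀ r hr.ne') (μ := μ)
  rw [MeasurableEquiv.coe_smul₀, Measure.map_addHaar_smul μ hr.ne', lintegral_smul_measure,
    abs_of_pos (by positivity)] at h
  exact h.symm

theorem withDensity_radialProj_preimage_inter_Iio (hN_meas : Measurable N)
    (hN_hom : ∀ t : ℝ, 0 < t → ∀ x, N (t • x) = t * N x) {f : E → ℝ} {m : ℝ}
    (hf_hom : ∀ t : ℝ, 0 < t → ∀ x, f (t • x) = t ^ m * f x)
    {s : Set E} (hs : MeasurableSet s) {r : ℝ} (hr : 0 < r) :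
    μ.withDensity (fun x => ENNReal.ofReal (f x)) (radialProj N ⁻¹' s ∩ N ⁻¹' Iio r) =
      ENNReal.ofReal (r ^ (finrank ℝ E + m)) *
        μ.withDensity (fun x => ENNReal.ofReal (f x)) (radialProj N ⁻¹' s ∩ N ⁻¹' Iio 1) := by
  have hmeas : ∀ a, MeasurableSet (radialProj N ⁻¹' s ∩ N ⁻¹' Iio a) := fun a =>
    (measurable_radialProj hN_meas hs).inter (hN_meas measurableSet_Iio)
  have hmem : ∀ y, r • y ∈ radialProj N ⁻¹' s ∩ N ⁻¹' Iio r ↔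
      y ∈ radialProj N ⁻¹' s ∩ N ⁻¹' Iio 1 := fun y => by
    simp only [mem_inter_iff, mem_preimage, mem_Iio, radialProj_smul hN_hom hr, hN_hom r hr,
      mul_lt_iff_lt_one_right hr]
  have hscale : ∀ y, (radialProj N ⁻¹' s ∩ N ⁻¹' Iio r).indicator (fun x => ENNReal.ofReal (f x))
      (r • y) = ENNReal.ofReal (r ^ m) *
        (radialProj N ⁻¹' s ∩ N ⁻¹' Iio 1).indicator (fun x => ENNReal.ofReal (f x)) y := by
    intro y
    by_cases hy : y ∈ radialProj N ⁻¹' s ∩ N ⁻¹' Iio 1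
    · rw [indicator_of_mem ((hmem y).2 hy), indicator_of_mem hy, hf_hom r hr,
        ENNReal.ofReal_mul (by positivity)]
    · rw [indicator_of_notMem (mt (hmem y).1 hy), indicator_of_notMem hy, mul_zero]
  rw [withDensity_apply _ (hmeas r), withDensity_apply _ (hmeas 1),
    ← lintegral_indicator (hmeas r), ← lintegral_indicator (hmeas 1)]
  calc _ = ENNReal.ofReal (r ^ finrank ℝ E) * ∫⁻ y, (radialProj N ⁻¹' s ∩ N ⁻¹' Iio r).indicator
        (fun x => ENNReal.ofReal (f x)) (r • y) ∂μ := by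
        rw [lintegral_comp_smul_of_pos μ _ hr, ← mul_assoc, ← ENNReal.ofReal_mul (by positivity),
          mul_inv_cancel₀ (by positivity), ENNReal.ofReal_one, one_mul]
    _ = _ := by
        simp_rw [hscale]
        rw [lintegral_const_mul' _ _ ENNReal.ofReal_ne_top, ← mul_assoc,
          ← ENNReal.ofReal_mul (by positivity), rpow_add hr, rpow_natCast]

theorem withDensity_exp_neg_radialProj_preimage_inter_Iio {p : ℝ} (hp : 0 < p)
    (hN_meas : Measurable N) (hN_nonneg : ∀ x, 0 ≤ N x)
    (hN_hom : ∀ t : ℝ, 0 < t → ∀ x, N (t • x) = t * N x) {f : E → ℝ} {m : ℝ}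
    (hf_meas : Measurable f) (hf_hom : ∀ t : ℝ, 0 < t → ∀ x, f (t • x) = t ^ m * f x)
    {s : Set E} (hs : MeasurableSet s) {a : ℝ} (ha : 0 < a) :
    μ.withDensity (fun x => ENNReal.ofReal (f x * exp (-N x ^ p)))
        (radialProj N ⁻¹' s ∩ N ⁻¹' Iio a) =
      μ.withDensity (fun x => ENNReal.ofReal (f x)) (radialProj N ⁻¹' s ∩ N ⁻¹' Iio 1) *
        ∫⁻ t in Ioi 0, ENNReal.ofReal (exp (-t) * min a (t ^ p⁻¹) ^ (finrank ℝ E + m)) := by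
  set ν := μ.withDensity (fun x => ENNReal.ofReal (f x))
  set S := radialProj N ⁻¹' s ∩ N ⁻¹' Iio a
  have hS : MeasurableSet S := (measurable_radialProj hN_meas hs).inter (hN_meas measurableSet_Iio)
  have hdens : μ.withDensity (fun x => ENNReal.ofReal (f x * exp (-N x ^ p))) =
      ν.withDensity (fun x => ENNReal.ofReal (exp (-N x ^ p))) := by
    rw [← withDensity_mul _ (by fun_prop) (by fun_prop)]
    congr 1 with x
    exact ENNReal.ofReal_mul' (exp_pos _).le
  have hlevel : ∀ t, ENNReal.ofReal (exp (-t)) * ν.restrict S {x | N x ^ p < t} =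
      ν (radialProj N ⁻¹' s ∩ N ⁻¹' Iio 1) * (Ioi 0).indicator
        (fun t => ENNReal.ofReal (exp (-t) * min a (t ^ p⁻¹) ^ (finrank ℝ E + m))) t := by
    intro t
    rcases le_or_gt t 0 with ht | ht
    · have hempty : {x | N x ^ p < t} = ∅ := eq_empty_of_forall_notMem fun x hx =>
        (rpow_nonneg (hN_nonneg x) p).not_gt (lt_of_lt_of_le hx ht)
      rw [hempty, measure_empty, indicator_of_notMem (notMem_Ioi.2 ht), mul_zero, mul_zero]
    · have hset : {x | N x ^ p < t} = N ⁻¹' Iio (t ^ p⁻¹) := by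
        ext x; exact (lt_rpow_inv_iff_of_pos (hN_nonneg x) ht.le hp).symm
      have hcut : N ⁻¹' Iio (t ^ p⁻¹) ∩ S = radialProj N ⁻¹' s ∩ N ⁻¹' Iio (min a (t ^ p⁻¹)) := by
        rw [inter_comm, inter_assoc, ← preimage_inter, Iio_inter_Iio]
      rw [indicator_of_mem (mem_Ioi.2 ht), hset, Measure.restrict_apply (hN_meas measurableSet_Iio),
        hcut, withDensity_radialProj_preimage_inter_Iio μ hN_meas hN_hom hf_hom hs
          (lt_min ha (rpow_pos_of_pos ht _)), ENNReal.ofReal_mul (exp_pos _).le]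
      ring
  rw [hdens, withDensity_apply _ hS, lintegral_ofReal_exp_neg_eq _ (by fun_prop)]
  simp_rw [hlevel]
  rw [lintegral_const_mul _ (Measurable.indicator (by fun_prop) measurableSet_Ioi),
    lintegral_indicator measurableSet_Ioi]

theorem indepFun_radialProj_withDensity {p : ℝ} (hp : 0 < p) (hN_meas : Measurable N)
    (hN_nonneg : ∀ x, 0 ≤ N x) (hN_hom : ∀ t : ℝ, 0 < t → ∀ x, N (t • x) = t * N x)
    {f : E → ℝ} {m : ℝ} (hf_meas : Measurable f)
    (hf_hom : ∀ t : ℝ, 0 < t → ∀ x, f (t • x) = t ^ m * f x)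
    [IsProbabilityMeasure (μ.withDensity fun x => ENNReal.ofReal (f x * exp (-N x ^ p)))] :
    IndepFun (radialProj N) N (μ.withDensity fun x => ENNReal.ofReal (f x * exp (-N x ^ p))) :=
  indepFun_of_measure_inter_preimage_Iio_eq_mul (measurable_radialProj hN_meas) hN_meas hN_nonneg
    _ _ fun _ hs _ ha => withDensity_exp_neg_radialProj_preimage_inter_Iio μ hp hN_meas hN_nonneg
      hN_hom hf_meas hf_hom hs ha

end RadialProj

theorem direction_norm_indep_general
    (p : ℝ) (hp : 0 < p) (n : ℕ) (m : ℝ)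
    (f : (Fin n → ℝ) → ℝ) (hf_meas : Measurable f)
    (hf_hom : ∀ (t : ℝ), 0 ≤ t → ∀ x, f (t • x) = t ^ m * f x)
    (C : ℝ)
    {Ω : Type*} [MeasurableSpace Ω] (P : Measure Ω) [IsProbabilityMeasure P]
    (X : Ω → (Fin n → ℝ)) (hX : Measurable X)
    (hdens : Measure.map X P =
      volume.withDensity (fun x => ENNReal.ofReal (C * f x * Real.exp (-(lpnorm p x) ^ p)))) :
    IndepFun (fun ω => (lpnorm p (X ω))⁻¹ • X ω) (fun ω => lpnorm p (X ω)) P := by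
  have hL := measurable_lpnorm p n
  have : IsProbabilityMeasure (volume.withDensity fun x =>
      ENNReal.ofReal (C * f x * exp (-lpnorm p x ^ p))) :=
    hdens ▸ Measure.isProbabilityMeasure_map hX.aemeasurable
  have h := indepFun_radialProj_withDensity volume hp hL (lpnorm_nonneg p)
    (fun t ht => lpnorm_smul hp ht.le) (hf_meas.const_mul C)
    (fun t ht x => by rw [hf_hom t ht.le]; ring)
  rw [← hdens] at h
  exact h.comp_of_map hX (measurable_radialProj hL) hL

/-- If `X` has density proportional to `f(x)·e^{-‖x‖_p^p}` with `f`
nonnegative, measurable and positively homogeneous of degree `m`, then the radial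
projection `X/‖X‖_p` and the norm `‖X‖_p` are independent. -/
theorem direction_norm_indep
    (p : ℝ) (hp : 0 < p) (n : ℕ) (m : ℝ) (hm : 0 ≤ m)
    (f : (Fin n → ℝ) → ℝ) (hf_meas : Measurable f) (hf_nonneg : ∀ x, 0 ≤ f x)
    (hf_hom : ∀ (t : ℝ), 0 ≤ t → ∀ x, f (t • x) = t ^ m * f x)
    (hf_int : 0 < ∫ x, f x * Real.exp (-(lpnorm p x) ^ p))
    (C : ℝ) (hC : 0 < C)
    {Ω : Type*} [MeasurableSpace Ω] (P : Measure Ω) [IsProbabilityMeasure P]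
    (X : Ω → (Fin n → ℝ)) (hX : Measurable X)
    (hdens : Measure.map X P =
      volume.withDensity (fun x => ENNReal.ofReal (C * f x * Real.exp (-(lpnorm p x) ^ p)))) :
    IndepFun (fun ω => (lpnorm p (X ω))⁻¹ • X ω) (fun ω => lpnorm p (X ω)) P :=
  direction_norm_indep_general p hp n m f hf_meas hf_hom C P X hX hdens
end

section
/- Let p ∈ (0,∞), α ≥ 0, and consider Λ(t) = t + sup_{y∈(0,1)}[-ty + (1/p)log(1-y) + α log(y)] + C for a constant C ∈ ℝ. Then the Legendre–Fenchel transform Λ*(x) = sup_{t∈ℝ}[tx - Λ(t)], evaluated at x ∈ (0,1), equals -(1/p)log(x) - α log(1-x) - C (interpreting α log(1-x) = 0 when α = 0). -/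
open Real Set

/-- For `Λ(t) = t + sup_{y∈(0,1)}[-ty + (1/p)log(1-y) + α log y] + C`,
the Legendre–Fenchel transform satisfies `Λ*(x) = -(1/p)log x - α log(1-x) - C`
for `x ∈ (0,1)`. -/
theorem legendre_transform_of_Lambda
    (p : ℝ) (hp : 0 < p) (α : ℝ) (hα : 0 ≤ α) (C : ℝ)
    (Λ : ℝ → ℝ)
    (hΛ : ∀ t : ℝ, Λ t = t +
      sSup ((fun y => -t * y + (1 / p) * Real.log (1 - y) + α * Real.log y) ''
        Set.Ioo (0:ℝ) 1) + C)
    (x : ℝ) (hx : x ∈ Set.Ioo (0:ℝ) 1) :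
    (⨆ t : ℝ, (t * x - Λ t)) = -(1 / p) * Real.log x - α * Real.log (1 - x) - C := by
  obtain ⟨hx0, hx1⟩ := hx
  have hx1' : 0 < 1 - x := by linarith
  have hp' : 0 < 1 / p := by positivity
  -- boundedness of the inner set
  have hbdd : ∀ t : ℝ, BddAbove
      ((fun y => -t * y + (1 / p) * Real.log (1 - y) + α * Real.log y) ''
        Set.Ioo (0:ℝ) 1) := by
    intro t
    refine ⟨|t|, ?_⟩
    rintro _ ⟨y, ⟨hy0, hy1⟩, rfl⟩
    have h1 : Real.log (1 - y) ≤ 0 := Real.log_nonpos (by linarith) (by linarith)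
    have h2 : Real.log y ≤ 0 := Real.log_nonpos (by linarith) (by linarith)
    have h3 : -t * y ≤ |t| := by
      have : |(-t) * y| ≤ |t| * 1 := by
        rw [abs_mul, abs_neg]
        exact mul_le_mul_of_nonneg_left (by rw [abs_of_pos hy0]; linarith) (abs_nonneg t)
      have := (le_abs_self ((-t) * y)).trans this
      linarith
    nlinarith
  -- membership of the maximizing point
  have hmem : (1 - x) ∈ Set.Ioo (0:ℝ) 1 := ⟨hx1', by linarith⟩
  -- the inner sup is at least the value at y = 1 - x
  have hlow : ∀ t : ℝ,
      -t * (1 - x) + (1 / p) * Real.log (1 - (1 - x)) + α * Real.log (1 - x) ≤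
      sSup ((fun y => -t * y + (1 / p) * Real.log (1 - y) + α * Real.log y) ''
        Set.Ioo (0:ℝ) 1) := fun t =>
    le_csSup (hbdd t) ⟨1 - x, hmem, rfl⟩
  -- every term t*x - Λ t is ≤ RHS
  have hub : ∀ t : ℝ, t * x - Λ t ≤ -(1 / p) * Real.log x - α * Real.log (1 - x) - C := by
    intro t
    have := hlow t
    rw [hΛ t]
    have hxx : (1 : ℝ) - (1 - x) = x := by ring
    rw [hxx] at this
    linarith
  -- the optimal t
  set t₀ : ℝ := α / (1 - x) - 1 / (p * x) with ht₀
  -- at t₀, y = 1-x is the maximizer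
  have hmax : ∀ y ∈ Set.Ioo (0:ℝ) 1,
      -t₀ * y + (1 / p) * Real.log (1 - y) + α * Real.log y ≤
      -t₀ * (1 - x) + (1 / p) * Real.log x + α * Real.log (1 - x) := by
    rintro y ⟨hy0, hy1⟩
    have hy1' : 0 < 1 - y := by linarith
    have h1 : Real.log (1 - y) ≤ Real.log x + ((1 - y) / x - 1) := by
      have := Real.log_le_sub_one_of_pos (show 0 < (1 - y) / x by positivity)
      rw [Real.log_div (by linarith) (ne_of_gt hx0)] at this
      linarith
    have h2 : Real.log y ≤ Real.log (1 - x) + (y / (1 - x) - 1) := by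
      have := Real.log_le_sub_one_of_pos (show 0 < y / (1 - x) by positivity)
      rw [Real.log_div (ne_of_gt hy0) (ne_of_gt hx1')] at this
      linarith
    have key : -t₀ * y + (1 / p) * (Real.log x + ((1 - y) / x - 1)) +
        α * (Real.log (1 - x) + (y / (1 - x) - 1)) =
        -t₀ * (1 - x) + (1 / p) * Real.log x + α * Real.log (1 - x) := by
      rw [ht₀]
      field_simp
      ring
    nlinarith [mul_le_mul_of_nonneg_left h1 (le_of_lt hp'),
      mul_le_mul_of_nonneg_left h2 hα]
  -- inner sup at t₀ equals the value at 1-x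
  have hSup : sSup ((fun y => -t₀ * y + (1 / p) * Real.log (1 - y) + α * Real.log y) ''
      Set.Ioo (0:ℝ) 1) =
      -t₀ * (1 - x) + (1 / p) * Real.log x + α * Real.log (1 - x) := by
    have hG : IsGreatest
        ((fun y => -t₀ * y + (1 / p) * Real.log (1 - y) + α * Real.log y) ''
          Set.Ioo (0:ℝ) 1)
        (-t₀ * (1 - x) + (1 / p) * Real.log x + α * Real.log (1 - x)) := by
      constructor
      · refine ⟨1 - x, hmem, ?_⟩
        show -t₀ * (1 - x) + 1 / p * Real.log (1 - (1 - x)) + α * Real.log (1 - x) = _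
        rw [show (1 : ℝ) - (1 - x) = x by ring]
      · rintro _ ⟨y, hy, rfl⟩
        exact hmax y hy
    exact hG.csSup_eq
  have hval : t₀ * x - Λ t₀ = -(1 / p) * Real.log x - α * Real.log (1 - x) - C := by
    rw [hΛ t₀, hSup]; ring
  refine le_antisymm (ciSup_le hub) ?_
  rw [← hval]
  exact le_ciSup ⟨_, Set.forall_mem_range.2 hub⟩ t₀
end

section
/- Let K ⊆ ℝⁿ be star-shaped with respect to the origin, contain the origin in its interior, and have finite nonzero Lebesgue measure. Then for any nonnegative measurable h : ℝⁿ → ℝ, ∫_{ℝⁿ} h(x) dx = n·vol_n(K)·∫_0^∞ r^{n-1} ∫_{∂K} h(r·y) C_K(dy) dr, where C_K is the cone probability measure on ∂K defined by C_K(A) = vol_n({r x : r ∈ [0,1], x ∈ A})/vol_n(K). -/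
open MeasureTheory Set ENNReal

/-!
Write `x = r • y` with `r > 0` and `y ∈ ∂K`. Off a null set this polar representation exists and
is unique. Points whose ray never leaves `K` form a subset of `K` invariant under dilation by `2`,
hence a null set since `vol K < ∞`. Points with two representations lie on the cone over boundary
points `y` having a farther boundary point `s • y`, `s > 1`, on their ray, and such `y` form a
`C_K`-null set; the additivity of `C_K` is what rules them out. On the good set, `x ↦ (r, y)`
pushes `vol` forward to `n r^{n-1} dr ⊗ vol(K) C_K`, because `{x | r ≤ c, y ∈ A}` is, up to a null
set, `c • cone(A)`, of volume `cⁿ vol(K) C_K(A)`. The formula then follows from Tonelli's theorem.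
-/

open Metric Module
open scoped Pointwise

section General

variable {E : Type*} [NormedAddCommGroup E]

lemma exists_pos_le_norm_of_mem_frontier {K : Set E} (h0 : (0 : E) ∈ interior K) :
    ∃ δ > 0, ∀ y ∈ frontier K, δ ≤ ‖y‖ := by
  obtain ⟨δ, hδ, hball⟩ := Metric.isOpen_iff.1 isOpen_interior 0 h0
  refine ⟨δ, hδ, fun y hy => not_lt.1 fun hlt => hy.2 (hball ?_)⟩
  rwa [mem_ball_zero_iff]

variable [NormedSpace ℝ E]

lemma StarConvex.smul_subset_smul {C : Set E} (hC : StarConvex ℝ 0 C) {t t' : ℝ} (ht : 0 < t)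
    (htt' : t ≤ t') : t • C ⊆ t' • C := by
  rintro _ ⟨c, hc, rfl⟩
  refine ⟨(t / t') • c, hC.smul_mem hc (div_nonneg ht.le (ht.le.trans htt'))
    (div_le_one_of_le₀ htt' (ht.le.trans htt')), ?_⟩
  change t' • (t / t') • c = t • c
  rw [smul_smul, mul_div_cancel₀ _ (ht.trans_le htt').ne']

lemma StarConvex.exists_smul_mem_frontier {K : Set E} (hK : StarConvex ℝ 0 K)
    (h0 : (0 : E) ∈ interior K) {x : E} {t : ℝ} (ht : 0 < t) (htK : t • x ∉ K) :
    ∃ τ : ℝ, 0 < τ ∧ τ • x ∈ frontier K ∧ (∀ s : ℝ, 0 < s → s • x ∈ K → s ≤ τ) ∧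
      ∀ s : ℝ, 0 < s → s < τ → s • x ∈ K := by
  set I : Set ℝ := {s | 0 < s ∧ s • x ∈ K}
  have hdown : ∀ s ∈ I, ∀ s' : ℝ, 0 < s' → s' ≤ s → s' • x ∈ K := by
    rintro s ⟨hs, hsK⟩ s' hs' hs's
    have := hK.smul_mem hsK (div_nonneg hs'.le hs.le) (div_le_one_of_le₀ hs's hs.le)
    rwa [smul_smul, div_mul_cancel₀ _ hs.ne'] at this
  have hbdd : BddAbove I := ⟨t, fun s hs => not_lt.1 fun hts => htK (hdown s hs t ht hts.le)⟩
  have hcont : Continuous fun s : ℝ => s • x := continuous_id.smul continuous_const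
  have hopen : IsOpen ((fun s : ℝ => s • x) ⁻¹' interior K) := isOpen_interior.preimage hcont
  obtain ⟨ε, hε, hεK⟩ := Metric.isOpen_iff.1 hopen 0 (by simpa using h0)
  have hεI : ε / 2 ∈ I := ⟨by positivity, interior_subset (hεK (by
    rw [Real.ball_eq_Ioo]; constructor <;> linarith))⟩
  set τ := sSup I
  have hτ : 0 < τ := (half_pos hε).trans_le (le_csSup hbdd hεI)
  have hub : ∀ s : ℝ, 0 < s → s • x ∈ K → s ≤ τ := fun s hs hsK => le_csSup hbdd ⟨hs, hsK⟩
  have hbelow : ∀ s : ℝ, 0 < s → s < τ → s • x ∈ K := fun s hs hsτ => by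
    obtain ⟨s', hs'I, hss'⟩ := exists_lt_of_lt_csSup ⟨_, hεI⟩ hsτ
    exact hdown s' hs'I s hs hss'.le
  refine ⟨τ, hτ, ⟨?_, fun hint => ?_⟩, hub, hbelow⟩
  · refine mem_closure_of_tendsto
      ((hcont.tendsto τ).mono_left (nhdsWithin_le_nhds (s := Iio τ))) ?_
    filter_upwards [Ioo_mem_nhdsLT hτ] with s hs using hbelow s hs.1 hs.2
  · obtain ⟨η, hη, hηK⟩ := Metric.isOpen_iff.1 hopen τ hint
    have hmem : τ + η / 2 ∈ ball τ η := by
      rw [Real.ball_eq_Ioo]; constructor <;> linarith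
    have := hub _ (by positivity) (interior_subset (hηK hmem))
    linarith

variable [MeasurableSpace E] [BorelSpace E]

lemma measurable_gauge_of_starConvex {C : Set E} (hC : StarConvex ℝ 0 C)
    (hCm : MeasurableSet C) : Measurable (gauge C) := by
  set D := ⋃ (q : ℚ) (_ : 0 < (q : ℝ)), (q : ℝ) • C
  have hD : ∀ x : E, ∀ t : ℝ, 0 < t → x ∈ t • C → x ∈ D := fun x t ht hxt => by
    obtain ⟨q, htq, -⟩ := exists_rat_btwn (lt_add_one t)
    exact mem_iUnion₂.2 ⟨q, ht.trans htq, hC.smul_subset_smul ht htq.le hxt⟩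
  refine measurable_of_Iio fun c => ?_
  rcases le_or_gt c 0 with hc | hc
  · convert MeasurableSet.empty
    exact eq_empty_of_forall_notMem fun x hx => (gauge_nonneg x).not_gt (lt_of_lt_of_le hx hc)
  have hpre :
      gauge C ⁻¹' Iio c = Dᶜ ∪ ⋃ (q : ℚ) (_ : 0 < (q : ℝ) ∧ (q : ℝ) < c), (q : ℝ) • C := by
    ext x
    refine ⟨fun hx => ?_, ?_⟩
    · by_cases hne : {t : ℝ | 0 < t ∧ x ∈ t • C}.Nonempty
      · obtain ⟨t, ⟨ht, hxt⟩, htc⟩ := exists_lt_of_csInf_lt hne hx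
        obtain ⟨q, htq, hqc⟩ := exists_rat_btwn htc
        exact Or.inr (mem_iUnion₂.2 ⟨q, ⟨ht.trans htq, hqc⟩, hC.smul_subset_smul ht htq.le hxt⟩)
      · refine Or.inl fun hxD => hne ?_
        obtain ⟨q, hq, hxq⟩ := mem_iUnion₂.1 hxD
        exact ⟨q, hq, hxq⟩
    · rintro (hxD | hxq)
      · have hempty : {t : ℝ | 0 < t ∧ x ∈ t • C} = ∅ :=
          eq_empty_of_forall_notMem fun t ht => hxD (hD x t ht.1 ht.2)
        change gauge C x < c
        rwa [gauge, hempty, Real.sInf_empty]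
      · obtain ⟨q, ⟨hq, hqc⟩, hxq⟩ := mem_iUnion₂.1 hxq
        exact (gauge_le_of_mem hq.le hxq).trans_lt hqc
  rw [hpre]
  exact (MeasurableSet.iUnion fun q => .iUnion fun _ => hCm.const_smul₀ _).compl.union
    (.iUnion fun q => .iUnion fun _ => hCm.const_smul₀ _)

variable [FiniteDimensional ℝ E]

lemma measurableSet_smul_of_isCompact_of_isClosed {C : Set ℝ} {B : Set E} (hC : IsCompact C)
    (hB : IsClosed B) : MeasurableSet (C • B) := by
  rw [← inter_univ B, ← iUnion_closedBall_nat (0 : E), inter_iUnion, smul_iUnion]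
  exact .iUnion fun m => (hC.smul_set ((isCompact_closedBall 0 _).inter_left hB)).measurableSet

variable (μ : Measure E) [μ.IsAddHaarMeasure]

lemma addHaar_eq_zero_of_smul_eq_self [Nontrivial E] {S : Set E} {c : ℝ} (hc : 1 < c)
    (hS : μ S ≠ ∞) (h : c • S = S) : μ S = 0 := by
  have hc' : (1 : ℝ≥0∞) < ENNReal.ofReal (c ^ finrank ℝ E) := by
    rw [← ENNReal.ofReal_one]
    exact (ENNReal.ofReal_lt_ofReal_iff_of_nonneg zero_le_one).2
      (one_lt_pow₀ hc finrank_pos.ne')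
  have hscale := Measure.addHaar_smul_of_nonneg μ (by linarith : (0 : ℝ) ≤ c) S
  rw [h] at hscale
  by_contra hS0
  exact (ENNReal.mul_lt_mul_left hS0 hS hc').ne' (by rw [one_mul]; exact hscale.symm)

lemma addHaar_eq_zero_of_pairwise_disjoint_smul {S : Set E} (hS : MeasurableSet S)
    {t : ℕ → ℝ} {c : ℝ} (ht : ∀ i, t i ∈ Icc 1 c)
    (hdisj : Pairwise (Function.onFun Disjoint fun i => t i • S)) : μ S = 0 := by
  rw [← inter_univ S, ← iUnion_closedBall_nat (0 : E), inter_iUnion]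
  refine measure_iUnion_null fun m => ?_
  set T := S ∩ closedBall (0 : E) m
  have hle : ∀ i, μ T ≤ μ (t i • T) := fun i => by
    rw [Measure.addHaar_smul_of_nonneg μ (zero_le_one.trans (ht i).1)]
    exact le_mul_of_one_le_left' (ENNReal.one_le_ofReal.2 (one_le_pow₀ (ht i).1))
  have hsub : (⋃ i, t i • T) ⊆ closedBall 0 (c * m) := by
    simp only [iUnion_subset_iff]
    rintro i _ ⟨x, hx, rfl⟩
    have hxm := mem_closedBall_zero_iff.1 hx.2
    rw [mem_closedBall_zero_iff, norm_smul, Real.norm_of_nonneg (zero_le_one.trans (ht i).1)]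
    exact mul_le_mul (ht i).2 hxm (norm_nonneg x) (zero_le_one.trans ((ht i).1.trans (ht i).2))
  have hsum : ∑' i, μ (t i • T) ≤ μ (closedBall 0 (c * m)) := by
    rw [← measure_iUnion (fun i j hij => (hdisj hij).mono (smul_set_mono inter_subset_left)
      (smul_set_mono inter_subset_left)) fun i => ?_]
    · exact measure_mono hsub
    · exact (hS.inter measurableSet_closedBall).const_smul₀ _
  by_contra hT
  have htop : ∑' i, μ (t i • T) = ∞ :=
    top_unique ((ENNReal.tsum_const_eq_top_of_ne_zero hT).ge.trans (ENNReal.tsum_le_tsum hle))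
  exact measure_closedBall_lt_top.ne (top_unique (htop ▸ hsum))

end General

lemma MeasureTheory.Measure.ext_of_Iic_of_ne_top {α : Type*} [TopologicalSpace α]
    [MeasurableSpace α] [SecondCountableTopology α] [LinearOrder α] [OrderTopology α]
    [BorelSpace α] [NoMinOrder α] {ν₁ ν₂ : Measure α} (h : ∀ c, ν₁ (Iic c) = ν₂ (Iic c))
    (hfin : ∀ c, ν₁ (Iic c) ≠ ∞) : ν₁ = ν₂ := by
  refine Measure.ext_of_Ioc' ν₁ ν₂ (fun a b _ =>
    ne_top_of_le_ne_top (hfin b) (measure_mono Ioc_subset_Iic_self)) fun a b hab => ?_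
  rw [← Iic_sdiff_Iic, measure_sdiff (Iic_subset_Iic.2 hab.le) nullMeasurableSet_Iic (hfin a),
    measure_sdiff (Iic_subset_Iic.2 hab.le) nullMeasurableSet_Iic (h a ▸ hfin a), h a, h b]

namespace ConeMeasure

variable {E : Type*} [NormedAddCommGroup E] [NormedSpace ℝ E]

section BoundaryCone

variable {K A B : Set E}

def boundaryCone (K A : Set E) : Set E := Icc (0 : ℝ) 1 • (A ∩ frontier K)

lemma boundaryCone_eq_setOf (K A : Set E) :
    boundaryCone K A = {y | ∃ r ∈ Icc (0 : ℝ) 1, ∃ x ∈ A ∩ frontier K, y = r • x} := by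
  ext y
  simp only [boundaryCone, mem_smul, mem_ofPred_eq, eq_comm]

lemma smul_mem_boundaryCone {x : E} {r : ℝ} (hr : r ∈ Icc (0 : ℝ) 1) (hx : x ∈ A)
    (hxK : x ∈ frontier K) : r • x ∈ boundaryCone K A :=
  smul_mem_smul hr ⟨hx, hxK⟩

lemma mem_boundaryCone_self {x : E} (hx : x ∈ A) (hxK : x ∈ frontier K) :
    x ∈ boundaryCone K A := by
  simpa using smul_mem_boundaryCone (r := 1) ⟨zero_le_one, le_rfl⟩ hx hxK

lemma boundaryCone_union (K A B : Set E) :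
    boundaryCone K (A ∪ B) = boundaryCone K A ∪ boundaryCone K B := by
  simp only [boundaryCone, union_inter_distrib_right, smul_union]

lemma starConvex_boundaryCone (K A : Set E) : StarConvex ℝ 0 (boundaryCone K A) := by
  rw [starConvex_zero_iff]
  rintro _ ⟨r, hr, x, hx, rfl⟩ a ha₀ ha₁
  rw [smul_smul]
  exact smul_mem_smul ⟨mul_nonneg ha₀ hr.1, mul_le_one₀ ha₁ hr.1 hr.2⟩ hx

lemma boundaryCone_subset_closedBall {R : ℝ} (hA : A ⊆ closedBall 0 R) :
    boundaryCone K A ⊆ closedBall 0 R := by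
  rintro _ ⟨r, hr, x, hx, rfl⟩
  have hxR : ‖x‖ ≤ R := mem_closedBall_zero_iff.1 (hA hx.1)
  rw [mem_closedBall_zero_iff, norm_smul, Real.norm_of_nonneg hr.1]
  nlinarith [norm_nonneg x, hr.2]

end BoundaryCone

/-- `σ` is the cone measure `C_K` of `K` with respect to the volume `μ`. -/
def IsConeMeasure [MeasurableSpace E] (μ : Measure E) (K : Set E) (σ : Measure E) : Prop :=
  ∀ A, MeasurableSet A → σ A = μ (boundaryCone K A) / μ K

def companions (K : Set E) (p M : ℝ) : Set E :=
  {y ∈ frontier K | ∃ s ∈ Icc p M, s • y ∈ frontier K}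

lemma isClosed_companions (K : Set E) (p M : ℝ) : IsClosed (companions K p M) := by
  have hrays : IsClosed {y : E | ∃ s ∈ Icc p M, s • y ∈ frontier K} := by
    have hcl : IsClosed {q : Icc p M × E | (q.1 : ℝ) • q.2 ∈ frontier K} :=
      isClosed_frontier.preimage ((continuous_subtype_val.comp continuous_fst).smul continuous_snd)
    convert isClosedMap_snd_of_compactSpace _ hcl using 1
    ext y
    simp [Subtype.exists]
  exact isClosed_frontier.inter hrays

namespace IsConeMeasure

variable [MeasurableSpace E] {μ : Measure E} {K A C : Set E} {σ : Measure E}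

lemma measure_boundaryCone (hσ : IsConeMeasure μ K σ) (hK0 : μ K ≠ 0) (hK : μ K ≠ ∞)
    (hA : MeasurableSet A) : μ (boundaryCone K A) = μ K * σ A := by
  rw [hσ A hA, ENNReal.mul_div_cancel hK0 hK]

lemma measure_inter_eq_of_boundaryCone_subset (hσ : IsConeMeasure μ K σ) (hA : MeasurableSet A)
    (hC : MeasurableSet C) (hCfin : σ C ≠ ∞) (h : boundaryCone K A ⊆ boundaryCone K C) :
    σ (A ∩ C) = σ A := by
  have hunion : σ (A ∪ C) = σ C := by
    rw [hσ _ (hA.union hC), hσ _ hC, boundaryCone_union, union_eq_right.2 h]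
  have hdiff : σ (A \ C) = 0 := by
    rw [← sdiff_union_self, measure_union disjoint_sdiff_left hC] at hunion
    exact (ENNReal.add_left_inj hCfin).1 (hunion.trans (zero_add _).symm)
  rw [← measure_inter_add_sdiff₀ A hC.nullMeasurableSet, hdiff, add_zero]

lemma measure_compl_frontier [OpensMeasurableSpace E] (hσ : IsConeMeasure μ K σ) :
    σ (frontier K)ᶜ = 0 := by
  have : boundaryCone K (frontier K)ᶜ = ∅ := by
    simp [boundaryCone, compl_inter_self]
  rw [hσ _ isClosed_frontier.measurableSet.compl, this, measure_empty, ENNReal.zero_div]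

variable [FiniteDimensional ℝ E] [μ.IsAddHaarMeasure]

lemma measure_lt_top_of_isBounded (hσ : IsConeMeasure μ K σ) (hK0 : μ K ≠ 0)
    (hA : MeasurableSet A) (hAb : Bornology.IsBounded A) : σ A < ∞ := by
  obtain ⟨R, hR⟩ := hAb.subset_closedBall 0
  rw [hσ A hA]
  exact ENNReal.div_lt_top
    ((measure_mono (boundaryCone_subset_closedBall hR)).trans_lt measure_closedBall_lt_top).ne hK0

variable [BorelSpace E]

lemma measure_inter_smul_frontier (hσ : IsConeMeasure μ K σ) (hK0 : μ K ≠ 0) {F : Set E}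
    (hF : IsCompact F) {p M : ℝ} (hp : 1 ≤ p) (hFc : F ⊆ companions K p M) :
    σ (F ∩ (Icc p M • F ∩ frontier K)) = σ F := by
  have hC : IsCompact (Icc p M • F ∩ frontier K) :=
    (isCompact_Icc.smul_set hF).inter_right isClosed_frontier
  have hCm := hC.isClosed.measurableSet
  refine hσ.measure_inter_eq_of_boundaryCone_subset hF.isClosed.measurableSet hCm
    (hσ.measure_lt_top_of_isBounded hK0 hCm hC.isBounded).ne ?_
  rintro _ ⟨r, hr, y, ⟨hyF, -⟩, rfl⟩
  obtain ⟨-, s, hs, hsy⟩ := hFc hyF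
  have hs0 : 0 < s := zero_lt_one.trans_le (hp.trans hs.1)
  change r • y ∈ _
  rw [show r • y = (r / s) • s • y by rw [smul_smul, div_mul_cancel₀ _ hs0.ne']]
  exact smul_mem_boundaryCone ⟨div_nonneg hr.1 hs0.le, div_le_one_of_le₀
    (hr.2.trans (hp.trans hs.1)) hs0.le⟩ ⟨smul_mem_smul hs hyF, hsy⟩ hsy

/-- Replacing `F` by those of its points that are farther points of points of `F` keeps `σ F`
(`measure_inter_smul_frontier`) and multiplies the distance of `F` from `0` by at least `p`;
iterating empties any bounded `F`. -/
lemma measure_companions_inter_closedBall (hσ : IsConeMeasure μ K σ) (hK0 : μ K ≠ 0) {δ : ℝ}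
    (hδ : 0 < δ) (hδK : ∀ y ∈ frontier K, δ ≤ ‖y‖) {p : ℝ} (hp : 1 < p) (M m : ℝ) :
    σ (companions K p M ∩ closedBall 0 m) = 0 := by
  set F₀ := companions K p M ∩ closedBall 0 m
  have hF₀ : IsCompact F₀ := (isCompact_closedBall 0 m).inter_left (isClosed_companions K p M)
  have hshrink : ∀ k : ℕ, ∃ F ⊆ F₀, IsCompact F ∧ σ F = σ F₀ ∧ ∀ y ∈ F, δ * p ^ k ≤ ‖y‖ := by
    intro k
    induction k with
    | zero => exact ⟨F₀, subset_rfl, hF₀, rfl, fun y hy => by simpa using hδK y hy.1.1⟩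
    | succ k ih =>
      obtain ⟨F, hFF₀, hF, hσF, hnorm⟩ := ih
      refine ⟨F ∩ (Icc p M • F ∩ frontier K), inter_subset_left.trans hFF₀,
        hF.inter_right ((isCompact_Icc.smul_set hF).isClosed.inter isClosed_frontier),
        (hσ.measure_inter_smul_frontier hK0 hF hp.le (hFF₀.trans inter_subset_left)).trans hσF, ?_⟩
      rintro _ ⟨-, ⟨s, hs, y, hy, rfl⟩, -⟩
      rw [norm_smul, Real.norm_of_nonneg (by linarith [hs.1])]
      calc δ * p ^ (k + 1) = p * (δ * p ^ k) := by ring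
        _ ≤ s * ‖y‖ := mul_le_mul hs.1 (hnorm y hy) (by positivity) (by linarith [hs.1])
  obtain ⟨k, hk⟩ := pow_unbounded_of_one_lt (m / δ) hp
  obtain ⟨F, hFF₀, -, hσF, hnorm⟩ := hshrink k
  have hF : F = ∅ := eq_empty_of_forall_notMem fun y hy => by
    have h1 := hnorm y hy
    have h2 := mem_closedBall_zero_iff.1 (hFF₀ hy).2
    rw [div_lt_iff₀ hδ] at hk
    linarith
  rw [← hσF, hF, measure_empty]

end IsConeMeasure

section Polar

variable {K A : Set E}

/-- Every point with two polar representations `r • y = r' • y'`, `r ≠ r'`, `y, y' ∈ ∂K`, lies in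
`multiHit K` (`mem_multiHit_of_smul_eq_smul`); its countable description keeps it measurable. -/
def multiHit (K : Set E) : Set E :=
  ⋃ k : ℕ, ((k : ℝ) + 1) •
    boundaryCone K (companions K (1 + ((k : ℝ) + 1)⁻¹) (k + 2) ∩ closedBall 0 (k + 1))

noncomputable def radius (K : Set E) : E → ℝ := gauge (boundaryCone K univ)

noncomputable def direction (K : Set E) (x : E) : E := (radius K x)⁻¹ • x

def goodSet (K : Set E) : Set E := {x | 0 < radius K x} \ multiHit K

def fullRays (K : Set E) : Set E := {x | ∀ t : ℝ, 0 < t → t • x ∈ K}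

def sector (K : Set E) (c : ℝ) (A : Set E) : Set E :=
  goodSet K ∩ (radius K ⁻¹' Iic c ∩ direction K ⁻¹' A)

lemma exists_eq_smul_of_mem_smul_boundaryCone {x : E} (hx : x ≠ 0) {t : ℝ}
    (hxt : x ∈ t • boundaryCone K A) :
    ∃ s, 0 < s ∧ s ≤ 1 ∧ ∃ y ∈ A, y ∈ frontier K ∧ x = (t * s) • y := by
  obtain ⟨_, ⟨s, hs, y, ⟨hyA, hy⟩, rfl⟩, rfl⟩ := hxt
  refine ⟨s, lt_of_le_of_ne hs.1 ?_, hs.2, y, hyA, hy, smul_smul t s y⟩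
  rintro rfl
  simp at hx

lemma smul_mem_multiHit {y : E} (hy : y ∈ frontier K) {t : ℝ} (ht : 1 < t)
    (hty : t • y ∈ frontier K) {ρ : ℝ} (hρ : 0 < ρ) : ρ • y ∈ multiHit K := by
  obtain ⟨k, hk⟩ := exists_nat_ge (max (max (t - 1)⁻¹ t) (max ‖y‖ ρ))
  simp only [max_le_iff] at hk
  obtain ⟨⟨hkt₁, hkt⟩, hky, hkρ⟩ := hk
  have hk1 : (0 : ℝ) < k + 1 := by positivity
  have hinv : ((k : ℝ) + 1)⁻¹ ≤ t - 1 := (inv_le_comm₀ hk1 (by linarith)).2 (by linarith)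
  refine mem_iUnion.2 ⟨k, (ρ / (k + 1)) • y, smul_mem_boundaryCone
    ⟨by positivity, (div_le_one hk1).2 (by linarith)⟩
    ⟨⟨hy, t, ⟨by linarith, by linarith⟩, hty⟩, mem_closedBall_zero_iff.2 (by linarith)⟩ hy, ?_⟩
  change ((k : ℝ) + 1) • (ρ / (k + 1)) • y = ρ • y
  rw [smul_smul, mul_div_cancel₀ _ hk1.ne']

lemma mem_multiHit_of_smul_eq_smul {y y' : E} (hy : y ∈ frontier K) (hy' : y' ∈ frontier K)
    {r r' : ℝ} (hr : 0 < r) (hrr' : r < r') (h : r • y = r' • y') : r • y ∈ multiHit K := by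
  have hy'y : (r' / r) • y' = y := by
    rw [div_eq_inv_mul, ← smul_smul, ← h, smul_smul, inv_mul_cancel₀ hr.ne', one_smul]
  rw [h]
  exact smul_mem_multiHit hy' ((one_lt_div hr).2 hrr') (hy'y ▸ hy) (hr.trans hrr')

lemma ne_zero_of_mem_goodSet {x : E} (hx : x ∈ goodSet K) : x ≠ 0 := by
  rintro rfl
  exact hx.1.ne' gauge_zero

lemma exists_eq_smul_of_mem_goodSet {x : E} (hx : x ∈ goodSet K) :
    ∃ r : ℝ, 0 < r ∧ ∃ y ∈ frontier K, x = r • y := by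
  obtain ⟨t, ht, hxt⟩ : {t : ℝ | 0 < t ∧ x ∈ t • boundaryCone K univ}.Nonempty := by
    by_contra hempty
    have : 0 < sInf {t : ℝ | 0 < t ∧ x ∈ t • boundaryCone K univ} := hx.1
    rw [not_nonempty_iff_eq_empty.1 hempty, Real.sInf_empty] at this
    exact this.false
  obtain ⟨s, hs, -, y, -, hy, rfl⟩ :=
    exists_eq_smul_of_mem_smul_boundaryCone (ne_zero_of_mem_goodSet hx) hxt
  exact ⟨t * s, mul_pos ht hs, y, hy, rfl⟩

lemma eq_of_mem_goodSet {x y y' : E} (hx : x ∈ goodSet K) (hy : y ∈ frontier K)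
    (hy' : y' ∈ frontier K) {r r' : ℝ} (hr : 0 < r) (hr' : 0 < r') (h : x = r • y)
    (h' : x = r' • y') : r = r' ∧ y = y' := by
  rcases lt_trichotomy r r' with hlt | rfl | hgt
  · exact (hx.2 (h ▸ mem_multiHit_of_smul_eq_smul hy hy' hr hlt (h.symm.trans h'))).elim
  · exact ⟨rfl, smul_right_injective E hr.ne' (h.symm.trans h')⟩
  · exact (hx.2 (h' ▸ mem_multiHit_of_smul_eq_smul hy' hy hr' hgt (h'.symm.trans h))).elim

lemma radius_eq_of_mem_goodSet {x y : E} (hx : x ∈ goodSet K) (hy : y ∈ frontier K) {r : ℝ}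
    (hr : 0 < r) (h : x = r • y) : radius K x = r := by
  have hxr : x ∈ r • boundaryCone K univ :=
    h ▸ smul_mem_smul_set (mem_boundaryCone_self (mem_univ y) hy)
  refine le_antisymm (gauge_le_of_mem hr.le hxr) (le_csInf ⟨r, hr, hxr⟩ ?_)
  rintro t ⟨ht, hxt⟩
  obtain ⟨s, hs, hs1, w, -, hw, hxw⟩ :=
    exists_eq_smul_of_mem_smul_boundaryCone (ne_zero_of_mem_goodSet hx) hxt
  rw [(eq_of_mem_goodSet hx hy hw hr (mul_pos ht hs) h hxw).1]
  exact mul_le_of_le_one_right ht.le hs1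

lemma radius_eq_inv_of_smul_mem_frontier {x : E} (hx : x ∈ goodSet K) {τ : ℝ} (hτ : 0 < τ)
    (hτx : τ • x ∈ frontier K) : radius K x = τ⁻¹ :=
  radius_eq_of_mem_goodSet hx hτx (inv_pos.2 hτ)
    (by rw [smul_smul, inv_mul_cancel₀ hτ.ne', one_smul])

lemma direction_eq_of_mem_goodSet {x y : E} (hx : x ∈ goodSet K) (hy : y ∈ frontier K) {r : ℝ}
    (hr : 0 < r) (h : x = r • y) : direction K x = y := by
  rw [direction, radius_eq_of_mem_goodSet hx hy hr h, h, smul_smul, inv_mul_cancel₀ hr.ne',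
    one_smul]

lemma direction_mem_frontier {x : E} (hx : x ∈ goodSet K) : direction K x ∈ frontier K := by
  obtain ⟨r, hr, y, hy, h⟩ := exists_eq_smul_of_mem_goodSet hx
  rwa [direction_eq_of_mem_goodSet hx hy hr h]

lemma radius_smul_direction {x : E} (hx : x ∈ goodSet K) : radius K x • direction K x = x := by
  rw [direction, smul_smul, mul_inv_cancel₀ hx.1.ne', one_smul]

lemma compl_goodSet_subset (hK : StarConvex ℝ 0 K) (h0 : (0 : E) ∈ interior K) :
    (goodSet K)ᶜ ⊆ fullRays K ∪ multiHit K := by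
  intro x hx
  simp only [goodSet, mem_compl_iff, mem_sdiff, mem_ofPred_eq, not_and, not_not] at hx
  by_cases hpos : 0 < radius K x
  · exact Or.inr (hx hpos)
  by_cases hx0 : x = 0
  · exact Or.inl fun t _ => by simpa [hx0] using interior_subset h0
  by_cases hne : {t : ℝ | 0 < t ∧ x ∈ t • boundaryCone K univ}.Nonempty
  · -- the infimum `radius K x ≤ 0` is not attained, so `x` has representations of two radii
    obtain ⟨t, ht, hxt⟩ := id hne
    obtain ⟨s, hs, -, y, -, hy, hxy⟩ := exists_eq_smul_of_mem_smul_boundaryCone hx0 hxt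
    have hr0 : radius K x < t * s := (not_lt.1 hpos).trans_lt (mul_pos ht hs)
    obtain ⟨t', ⟨ht', hxt'⟩, hlt⟩ := exists_lt_of_csInf_lt hne hr0
    obtain ⟨s', hs', hs'1, y', -, hy', hxy'⟩ := exists_eq_smul_of_mem_smul_boundaryCone hx0 hxt'
    rw [hxy']
    exact Or.inr (mem_multiHit_of_smul_eq_smul hy' hy (mul_pos ht' hs')
      ((mul_le_of_le_one_right ht'.le hs'1).trans_lt hlt) (hxy'.symm.trans hxy))
  · refine Or.inl fun t ht => not_not.1 fun htK => hne ?_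
    obtain ⟨τ, hτ, hτx, -⟩ := hK.exists_smul_mem_frontier h0 ht htK
    refine ⟨τ⁻¹, inv_pos.2 hτ, τ • x, mem_boundaryCone_self (mem_univ _) hτx, ?_⟩
    simp [smul_smul, inv_mul_cancel₀ hτ.ne']

lemma sector_eq_goodSet_inter_smul {c : ℝ} (hc : 0 < c) (A : Set E) :
    sector K c A = goodSet K ∩ c • boundaryCone K A := by
  ext x
  refine ⟨fun ⟨hx, hxc, hxA⟩ => ⟨hx, (radius K x / c) • direction K x, smul_mem_boundaryCone
    ⟨div_nonneg hx.1.le hc.le, div_le_one_of_le₀ hxc hc.le⟩ hxA (direction_mem_frontier hx), ?_⟩,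
    fun ⟨hx, hxc⟩ => ?_⟩
  · change c • (radius K x / c) • direction K x = x
    rw [smul_smul, mul_div_cancel₀ _ hc.ne', radius_smul_direction hx]
  · obtain ⟨s, hs, hs1, y, hyA, hy, h⟩ :=
      exists_eq_smul_of_mem_smul_boundaryCone (ne_zero_of_mem_goodSet hx) hxc
    refine ⟨hx, ?_, ?_⟩
    · change radius K x ≤ c
      rw [radius_eq_of_mem_goodSet hx hy (mul_pos hc hs) h]
      exact mul_le_of_le_one_right hc.le hs1
    · change direction K x ∈ A
      rwa [direction_eq_of_mem_goodSet hx hy (mul_pos hc hs) h]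

lemma sector_one_univ_subset (hKs : StarConvex ℝ 0 K) (h0 : (0 : E) ∈ interior K) :
    sector K 1 univ ⊆ K ∪ frontier K ∩ goodSet K := by
  rintro x ⟨hxG, hx1, -⟩
  by_cases hxK : x ∈ K
  · exact Or.inl hxK
  obtain ⟨τ, hτ, hτx, -, hbelow⟩ := hKs.exists_smul_mem_frontier h0 one_pos (by rwa [one_smul])
  have hτ1 : τ ≤ 1 := not_lt.1 fun h1 => hxK (by simpa using hbelow 1 one_pos h1)
  have h1τ : 1 ≤ τ := by
    have : radius K x ≤ 1 := hx1
    rwa [radius_eq_inv_of_smul_mem_frontier hxG hτ hτx, inv_le_one₀ hτ] at this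
  rw [le_antisymm hτ1 h1τ, one_smul] at hτx
  exact Or.inr ⟨hτx, hxG⟩

lemma subset_sector_one_univ (hKs : StarConvex ℝ 0 K) (h0 : (0 : E) ∈ interior K) :
    K ⊆ sector K 1 univ ∪ (fullRays K ∪ (goodSet K)ᶜ) := by
  intro x hxK
  by_cases hxG : x ∈ goodSet K
  swap; · exact Or.inr (Or.inr hxG)
  by_cases hfull : x ∈ fullRays K
  · exact Or.inr (Or.inl hfull)
  simp only [fullRays, mem_ofPred_eq, not_forall] at hfull
  obtain ⟨t, ht, htK⟩ := hfull
  obtain ⟨τ, hτ, hτx, hub, -⟩ := hKs.exists_smul_mem_frontier h0 ht htK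
  refine Or.inl ⟨hxG, ?_, mem_univ _⟩
  change radius K x ≤ 1
  rw [radius_eq_inv_of_smul_mem_frontier hxG hτ hτx]
  exact inv_le_one_of_one_le₀ (hub 1 one_pos (by rwa [one_smul]))

end Polar

section PolarMeasure

variable [FiniteDimensional ℝ E] [MeasurableSpace E] [BorelSpace E] {μ : Measure E}
  [μ.IsAddHaarMeasure] {K : Set E} {σ : Measure E}

lemma measurableSet_boundaryCone {A : Set E} (hA : IsClosed A) :
    MeasurableSet (boundaryCone K A) :=
  measurableSet_smul_of_isCompact_of_isClosed isCompact_Icc (hA.inter isClosed_frontier)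

lemma measurable_radius : Measurable (radius K) :=
  measurable_gauge_of_starConvex (starConvex_boundaryCone K univ)
    (measurableSet_boundaryCone isClosed_univ)

lemma measurable_direction : Measurable (direction K) :=
  measurable_radius.inv.smul measurable_id

lemma measurableSet_goodSet : MeasurableSet (goodSet K) :=
  (measurable_radius measurableSet_Ioi).diff <| .iUnion fun _ =>
    (measurableSet_boundaryCone
      ((isClosed_companions K _ _).inter isClosed_closedBall)).const_smul₀ _

lemma IsConeMeasure.measure_multiHit (hσ : IsConeMeasure μ K σ) (h0 : (0 : E) ∈ interior K)
    (hK0 : μ K ≠ 0) (hK : μ K ≠ ∞) : μ (multiHit K) = 0 := by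
  obtain ⟨δ, hδ, hδK⟩ := exists_pos_le_norm_of_mem_frontier h0
  refine measure_iUnion_null fun k => ?_
  rw [Measure.addHaar_smul_of_nonneg μ (by positivity), hσ.measure_boundaryCone hK0 hK
    ((isClosed_companions K _ _).inter isClosed_closedBall).measurableSet,
    hσ.measure_companions_inter_closedBall hK0 hδ hδK (lt_add_of_pos_right 1 (by positivity)),
    mul_zero, mul_zero]

lemma measure_fullRays [Nontrivial E] (hK : μ K ≠ ∞) : μ (fullRays K) = 0 := by
  have hsub : fullRays K ⊆ K := fun x hx => by simpa using hx 1 one_pos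
  refine addHaar_eq_zero_of_smul_eq_self μ one_lt_two (ne_top_of_le_ne_top hK (measure_mono hsub))
    (Subset.antisymm ?_ fun x hx => ⟨(2 : ℝ)⁻¹ • x, fun t ht => ?_, ?_⟩)
  · rintro _ ⟨x, hx, rfl⟩ t ht
    simpa [smul_smul] using hx (t * 2) (by positivity)
  · simpa [smul_smul] using hx (t * 2⁻¹) (by positivity)
  · simp [smul_smul]

lemma IsConeMeasure.measure_compl_goodSet [Nontrivial E] (hσ : IsConeMeasure μ K σ)
    (hKs : StarConvex ℝ 0 K) (h0 : (0 : E) ∈ interior K) (hK0 : μ K ≠ 0) (hK : μ K ≠ ∞) :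
    μ (goodSet K)ᶜ = 0 :=
  measure_mono_null (compl_goodSet_subset hKs h0)
    (measure_union_null (measure_fullRays hK) (hσ.measure_multiHit h0 hK0 hK))

/-- The dilates `t • (∂K ∩ goodSet K)`, `t > 0`, are pairwise disjoint by uniqueness of polar
representations, so `∂K ∩ goodSet K` is null. -/
lemma measure_frontier_inter_goodSet : μ (frontier K ∩ goodSet K) = 0 := by
  set t : ℕ → ℝ := fun i => 1 + ((i : ℝ) + 1)⁻¹
  refine addHaar_eq_zero_of_pairwise_disjoint_smul μ
    (isClosed_frontier.measurableSet.inter measurableSet_goodSet) (t := t) (c := 2)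
    (fun i => ⟨le_add_of_nonneg_right (by positivity), by
      have : ((i : ℝ) + 1)⁻¹ ≤ 1 := inv_le_one_of_one_le₀ (by simp)
      simp only [t]; linarith⟩) fun i j hij => disjoint_left.2 ?_
  rintro _ ⟨x, hx, rfl⟩ ⟨x', hx', h⟩
  have ht : ∀ k, 0 < t k := fun k => by positivity
  have hxx' : x = (t j / t i) • x' := by
    rw [div_eq_inv_mul, ← smul_smul, show t j • x' = t i • x from h, smul_smul,
      inv_mul_cancel₀ (ht i).ne', one_smul]
  have := (eq_of_mem_goodSet hx.2 hx.1 hx'.1 one_pos (div_pos (ht j) (ht i)) (one_smul ℝ x).symm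
    hxx').1
  rw [eq_div_iff (ht i).ne', one_mul] at this
  simp only [t, _root_.add_right_inj, inv_inj, _root_.add_left_inj, Nat.cast_inj] at this
  exact hij this

lemma measure_sector [Nontrivial E] (hG : μ (goodSet K)ᶜ = 0) (c : ℝ) (A : Set E) :
    μ (sector K c A) = ENNReal.ofReal c ^ finrank ℝ E * μ (boundaryCone K A) := by
  rcases le_or_gt c 0 with hc | hc
  · have : sector K c A = ∅ :=
      eq_empty_of_forall_notMem fun x hx => (hx.1.1.trans_le (hx.2.1.trans hc)).false
    rw [this, measure_empty, ENNReal.ofReal_of_nonpos hc, zero_pow finrank_pos.ne', zero_mul]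
  · rw [sector_eq_goodSet_inter_smul hc, inter_comm, measure_inter_conull hG,
      Measure.addHaar_smul_of_nonneg μ hc.le, ENNReal.ofReal_pow hc.le]

lemma measure_sector_one_univ [Nontrivial E] (hKs : StarConvex ℝ 0 K)
    (h0 : (0 : E) ∈ interior K) (hK : μ K ≠ ∞) (hG : μ (goodSet K)ᶜ = 0) :
    μ (sector K 1 univ) = μ K := by
  refine le_antisymm ?_ ?_
  · calc μ (sector K 1 univ) ≤ μ K + μ (frontier K ∩ goodSet K) :=
          (measure_mono (sector_one_univ_subset hKs h0)).trans (measure_union_le _ _)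
      _ = μ K := by rw [measure_frontier_inter_goodSet, add_zero]
  · calc μ K ≤ μ (sector K 1 univ) + μ (fullRays K ∪ (goodSet K)ᶜ) :=
          (measure_mono (subset_sector_one_univ hKs h0)).trans (measure_union_le _ _)
      _ = μ (sector K 1 univ) := by rw [measure_union_null (measure_fullRays hK) hG, add_zero]

lemma IsConeMeasure.isProbabilityMeasure [Nontrivial E] (hσ : IsConeMeasure μ K σ)
    (hKs : StarConvex ℝ 0 K) (h0 : (0 : E) ∈ interior K) (hK0 : μ K ≠ 0) (hK : μ K ≠ ∞) :
    IsProbabilityMeasure σ := by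
  constructor
  have hG := hσ.measure_compl_goodSet hKs h0 hK0 hK
  have h1 := measure_sector_one_univ hKs h0 hK hG
  rw [measure_sector hG, ENNReal.ofReal_one, one_pow, one_mul] at h1
  rw [hσ univ MeasurableSet.univ, h1, ENNReal.div_self hK0 hK]

end PolarMeasure

noncomputable def radialMeasure (n : ℕ) : Measure ℝ :=
  (volume.restrict (Ioi 0)).withDensity fun r => ENNReal.ofReal (n * r ^ (n - 1))

instance (n : ℕ) : SigmaFinite (radialMeasure n) :=
  SigmaFinite.withDensity_of_ne_top (ae_of_all _ fun _ => ofReal_ne_top)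

lemma radialMeasure_Iic {n : ℕ} (hn : n ≠ 0) (c : ℝ) :
    radialMeasure n (Iic c) = ENNReal.ofReal c ^ n := by
  rw [radialMeasure, withDensity_apply _ measurableSet_Iic,
    Measure.restrict_restrict measurableSet_Iic, Iic_inter_Ioi]
  rcases le_or_gt c 0 with hc | hc
  · rw [Ioc_eq_empty hc.not_gt, Measure.restrict_empty, lintegral_zero_measure,
      ENNReal.ofReal_of_nonpos hc, zero_pow hn]
  have hint : IntegrableOn (fun r : ℝ => n * r ^ (n - 1)) (Ioc 0 c) :=
    (continuous_const.mul (continuous_pow _)).integrableOn_Ioc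
  rw [← ofReal_integral_eq_lintegral_ofReal hint (ae_restrict_of_forall_mem measurableSet_Ioc
    fun r hr => by have := hr.1; positivity), ← intervalIntegral.integral_of_le hc.le,
    intervalIntegral.integral_eq_sub_of_hasDerivAt (fun r _ => hasDerivAt_pow n r)
      ((continuous_const.mul (continuous_pow _)).intervalIntegrable _ _),
    zero_pow hn, sub_zero, ENNReal.ofReal_pow hc.le]

section Integration

variable [FiniteDimensional ℝ E] [MeasurableSpace E] [BorelSpace E] [Nontrivial E]
  {μ : Measure E} [μ.IsAddHaarMeasure] {K : Set E} {σ : Measure E}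

lemma IsConeMeasure.map_radius_direction (hσ : IsConeMeasure μ K σ) (hKs : StarConvex ℝ 0 K)
    (h0 : (0 : E) ∈ interior K) (hK0 : μ K ≠ 0) (hK : μ K ≠ ∞) :
    (μ.restrict (goodSet K)).map (fun x => (radius K x, direction K x)) =
      (radialMeasure (finrank ℝ E)).prod (μ K • σ) := by
  have hG := hσ.measure_compl_goodSet hKs h0 hK0 hK
  have := hσ.isProbabilityMeasure hKs h0 hK0 hK
  have : IsFiniteMeasure (μ K • σ) := ⟨by simpa using hK.lt_top⟩
  have hΘ : Measurable fun x => (radius K x, direction K x) :=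
    measurable_radius.prodMk measurable_direction
  refine (Measure.prod_eq fun s A hs hA => ?_).symm
  have hmap : (μ K * σ A) • radialMeasure (finrank ℝ E) =
      (μ.restrict (goodSet K ∩ direction K ⁻¹' A)).map (radius K) := by
    refine Measure.ext_of_Iic_of_ne_top (fun c => ?_) fun c => ?_
    · rw [Measure.map_apply measurable_radius measurableSet_Iic,
        Measure.restrict_apply (measurable_radius measurableSet_Iic), Measure.smul_apply,
        radialMeasure_Iic finrank_pos.ne', smul_eq_mul,
        show radius K ⁻¹' Iic c ∩ (goodSet K ∩ direction K ⁻¹' A) = sector K c A by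
          rw [sector, inter_left_comm], measure_sector hG, hσ.measure_boundaryCone hK0 hK hA,
        mul_comm]
    · rw [Measure.smul_apply, radialMeasure_Iic finrank_pos.ne', smul_eq_mul]
      exact mul_ne_top (mul_ne_top hK (measure_ne_top σ A)) (pow_ne_top ofReal_ne_top)
  rw [Measure.map_apply hΘ (hs.prod hA), Measure.restrict_apply (hΘ (hs.prod hA)),
    mk_preimage_prod, Measure.smul_apply, smul_eq_mul, inter_assoc, inter_comm _ (goodSet K),
    ← Measure.restrict_apply (measurable_radius hs), ← Measure.map_apply measurable_radius hs,
    ← hmap, Measure.smul_apply, smul_eq_mul, mul_comm]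

theorem IsConeMeasure.lintegral_eq_lintegral_boundary (hσ : IsConeMeasure μ K σ)
    (hKs : StarConvex ℝ 0 K) (h0 : (0 : E) ∈ interior K) (hK0 : μ K ≠ 0) (hK : μ K ≠ ∞)
    {f : E → ℝ≥0∞} (hf : Measurable f) :
    ∫⁻ x, f x ∂μ = finrank ℝ E * μ K * ∫⁻ r in Ioi 0,
      ENNReal.ofReal (r ^ (finrank ℝ E - 1)) * ∫⁻ y in frontier K, f (r • y) ∂σ := by
  have hG := hσ.measure_compl_goodSet hKs h0 hK0 hK
  have := hσ.isProbabilityMeasure hKs h0 hK0 hK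
  have hF : Measurable fun p : ℝ × E => f (p.1 • p.2) := hf.comp measurable_smul
  have hΘ : Measurable fun x => (radius K x, direction K x) :=
    measurable_radius.prodMk measurable_direction
  have hinner : Measurable fun r : ℝ => ∫⁻ y, f (r • y) ∂σ := hF.lintegral_prod_right'
  rw [Measure.restrict_eq_self_of_ae_mem (s := frontier K)
    (mem_ae_iff.2 hσ.measure_compl_frontier)]
  calc ∫⁻ x, f x ∂μ = ∫⁻ x in goodSet K, f x ∂μ := by
        rw [Measure.restrict_eq_self_of_ae_mem (s := goodSet K) (mem_ae_iff.2 hG)]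
    _ = ∫⁻ x in goodSet K, f (radius K x • direction K x) ∂μ :=
        setLIntegral_congr_fun measurableSet_goodSet fun x hx => by rw [radius_smul_direction hx]
    _ = ∫⁻ p, f (p.1 • p.2) ∂(radialMeasure (finrank ℝ E)).prod (μ K • σ) := by
        rw [← hσ.map_radius_direction hKs h0 hK0 hK, lintegral_map hF hΘ]
    _ = ∫⁻ r, μ K * ∫⁻ y, f (r • y) ∂σ ∂radialMeasure (finrank ℝ E) := by
        rw [lintegral_prod _ hF.aemeasurable]
        simp only [lintegral_smul_measure, smul_eq_mul]
    _ = ∫⁻ r in Ioi 0, (finrank ℝ E * μ K) *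
          (ENNReal.ofReal (r ^ (finrank ℝ E - 1)) * ∫⁻ y, f (r • y) ∂σ) := by
        rw [radialMeasure, lintegral_withDensity_eq_lintegral_mul _ (by fun_prop)
          (hinner.const_mul (μ K))]
        refine lintegral_congr fun r => ?_
        rw [Pi.mul_apply, ENNReal.ofReal_mul (Nat.cast_nonneg _), ofReal_natCast]
        ring
    _ = _ := lintegral_const_mul _ ((by fun_prop : Measurable fun r : ℝ =>
          ENNReal.ofReal (r ^ (finrank ℝ E - 1))).mul hinner)

end Integration

end ConeMeasure

theorem polar_integration_general_general
    (n : ℕ) (hn : 0 < n) (K : Set (Fin n → ℝ))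
    (hstar : ∀ x ∈ K, ∀ r ∈ Set.Icc (0:ℝ) 1, r • x ∈ K)
    (h0 : (0 : Fin n → ℝ) ∈ interior K)
    (hvol_pos : 0 < volume K) (hvol_fin : volume K < ⊤)
    (μ : Measure (Fin n → ℝ))
    (hμ : ∀ A : Set (Fin n → ℝ), MeasurableSet A →
      μ A = volume {y | ∃ r ∈ Set.Icc (0:ℝ) 1, ∃ x ∈ A ∩ frontier K, y = r • x} / volume K)
    (h : (Fin n → ℝ) → ℝ) (hmeas : Measurable h) :
    ∫⁻ x, ENNReal.ofReal (h x) =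
      (n : ℝ≥0∞) * volume K *
        ∫⁻ r in Set.Ioi (0:ℝ),
          ENNReal.ofReal (r ^ (n - 1)) * ∫⁻ y in frontier K, ENNReal.ofReal (h (r • y)) ∂μ := by
  have : Nonempty (Fin n) := ⟨⟨0, hn⟩⟩
  have hK : StarConvex ℝ 0 K := starConvex_zero_iff.2 fun x hx a ha₀ ha₁ => hstar x hx a ⟨ha₀, ha₁⟩
  have hσ : ConeMeasure.IsConeMeasure volume K μ := fun A hA => by
    rw [hμ A hA, ConeMeasure.boundaryCone_eq_setOf]
  simpa only [Module.finrank_fin_fun] using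
    hσ.lintegral_eq_lintegral_boundary hK h0 hvol_pos.ne' hvol_fin.ne hmeas.ennreal_ofReal

/-- general polar integration formula: for `K ⊆ ℝⁿ` star-shaped
with respect to the origin, with the origin in its interior and finite nonzero
volume, and the cone probability measure `μ = C_K` on `∂K`, one has
`∫ h(x) dx = n · vol(K) · ∫_0^∞ r^{n-1} ∫_{∂K} h(r·y) C_K(dy) dr`. -/
theorem polar_integration_general
    (n : ℕ) (hn : 0 < n) (K : Set (Fin n → ℝ))
    (hstar : ∀ x ∈ K, ∀ r ∈ Set.Icc (0:ℝ) 1, r • x ∈ K)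
    (h0 : (0 : Fin n → ℝ) ∈ interior K)
    (hvol_pos : 0 < volume K) (hvol_fin : volume K < ⊤)
    (μ : Measure (Fin n → ℝ))
    (hμ : ∀ A : Set (Fin n → ℝ), MeasurableSet A →
      μ A = volume {y | ∃ r ∈ Set.Icc (0:ℝ) 1, ∃ x ∈ A ∩ frontier K, y = r • x} / volume K)
    (h : (Fin n → ℝ) → ℝ) (hmeas : Measurable h) (hnonneg : ∀ x, 0 ≤ h x) :
    ∫⁻ x, ENNReal.ofReal (h x) =
      (n : ℝ≥0∞) * volume K *
        ∫⁻ r in Set.Ioi (0:ℝ),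
          ENNReal.ofReal (r ^ (n - 1)) * ∫⁻ y in frontier K, ENNReal.ofReal (h (r • y)) ∂μ :=
  polar_integration_general_general n hn K hstar h0 hvol_pos hvol_fin μ hμ h hmeas
end
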